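/- arXiv:2308.13071 — 9 statements merged into one kernel-verified Lean document; each statement's English description precedes it below -/
import Mathlib

section
/- Let {x_n} be a sequence of nonzero vectors in a separable Hilbert space H that admits an orthogonal decomposition into subsequences {x_n^i} (indexed by i) whose closed spans are mutually orthogonal, and suppose each subsequence {x_n^i} has cardinality at most N for some fixed N. Then the normalized sequence {x_n/‖x_n‖} is a Bessel sequence with Bessel bound N. -/
open scoped ComplexInnerProductSpace ENNReal
open Filter Topology

noncomputable section

variable {E : Type*} [NormedAddCommGroup E] [InnerProductSpace ℂ E]

/-- `y` is a Bessel sequence with Bessel bound `B`: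
`∑ᵢ |⟪z, yᵢ⟫|² ≤ B‖z‖²` for all `z` (sum taken in `ℝ≥0∞` so that divergence is handled). -/
def BesselWith {ι : Type*} (y : ι → E) (B : ℝ) : Prop :=
  ∀ z : E, ∑' i, ENNReal.ofReal (‖⟪z, y i⟫‖ ^ 2) ≤ ENNReal.ofReal (B * ‖z‖ ^ 2)

/-- `y` satisfies the lower frame condition with bound `A`:
`A‖z‖² ≤ ∑ᵢ |⟪z, yᵢ⟫|²` for all `z`. -/
def LowerFrameWith {ι : Type*} (y : ι → E) (A : ℝ) : Prop :=
  ∀ z : E, ENNReal.ofReal (A * ‖z‖ ^ 2) ≤ ∑' i, ENNReal.ofReal (‖⟪z, y i⟫‖ ^ 2)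

/-- `y` is a frame with frame bounds `A ≤ B`. -/
def FrameWith {ι : Type*} (y : ι → E) (A B : ℝ) : Prop :=
  0 < A ∧ A ≤ B ∧ LowerFrameWith y A ∧ BesselWith y B

/-- The normalized sequence `yᵢ/‖yᵢ‖`. -/
def normalizeSeq {ι : Type*} (y : ι → E) : ι → E := fun i => (‖y i‖ : ℂ)⁻¹ • y i


/-! Write `Vᵢ` for the (finite-dimensional) span of the `i`-th block and `Pᵢ` for the orthogonal
projection onto it. A unit vector `e ∈ Vᵢ` satisfies `|⟪z, e⟫| = |⟪Pᵢ z, e⟫| ≤ ‖Pᵢ z‖`, so the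
`i`-th block contributes at most `N ‖Pᵢ z‖²`; since the `Vᵢ` are mutually orthogonal,
`∑ᵢ ‖Pᵢ z‖² ≤ ‖z‖²` is Bessel's inequality for the family of projections. -/

theorem norm_normalizeSeq_le_one {ι : Type*} (y : ι → E) (i : ι) : ‖normalizeSeq y i‖ ≤ 1 := by
  rcases eq_or_ne (y i) 0 with h | h
  · simp [normalizeSeq, h]
  · simp [normalizeSeq, norm_smul, h]

section Projection

variable {𝕜 F : Type*} [RCLike 𝕜] [NormedAddCommGroup F] [InnerProductSpace 𝕜 F]

theorem norm_inner_le_norm_orthogonalProjectionOnto (K : Submodule 𝕜 F) [K.HasOrthogonalProjection]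
    (z : F) {e : F} (he : e ∈ K) (he₁ : ‖e‖ ≤ 1) :
    ‖inner 𝕜 z e‖ ≤ ‖K.orthogonalProjectionOnto z‖ :=
  calc ‖inner 𝕜 z e‖ = ‖inner 𝕜 (K.orthogonalProjectionOnto z) (⟨e, he⟩ : K)‖ := by
        rw [Submodule.inner_orthogonalProjectionOnto_eq_of_mem_right]
    _ ≤ ‖K.orthogonalProjectionOnto z‖ * ‖e‖ := norm_inner_le_norm _ _
    _ ≤ ‖K.orthogonalProjectionOnto z‖ := mul_le_of_le_one_right (norm_nonneg _) he₁

theorem OrthogonalFamily.sum_norm_orthogonalProjectionOnto_sq_le {ι : Type*}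
    {V : ι → Submodule 𝕜 F} [∀ i, (V i).HasOrthogonalProjection]
    (hV : OrthogonalFamily 𝕜 (fun i => V i) fun i => (V i).subtypeₗᵢ) (z : F) (s : Finset ι) :
    ∑ i ∈ s, ‖(V i).orthogonalProjectionOnto z‖ ^ 2 ≤ ‖z‖ ^ 2 := by
  set w := ∑ i ∈ s, ((V i).orthogonalProjectionOnto z : F)
  have hw : ‖w‖ ^ 2 = ∑ i ∈ s, ‖(V i).orthogonalProjectionOnto z‖ ^ 2 :=
    hV.norm_sum (fun i => (V i).orthogonalProjectionOnto z) s
  have hzw : RCLike.re (inner 𝕜 z w) = ‖w‖ ^ 2 := by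
    rw [hw, _root_.inner_sum, map_sum]
    refine Finset.sum_congr rfl fun i _ => ?_
    rw [← Submodule.inner_orthogonalProjectionOnto_eq_of_mem_right, inner_self_eq_norm_sq]
  have : ‖w‖ ^ 2 ≤ ‖z‖ * ‖w‖ := hzw ▸ re_inner_le_norm z w
  rw [← hw]
  nlinarith [norm_nonneg w, norm_nonneg z]

theorem OrthogonalFamily.tsum_norm_orthogonalProjectionOnto_sq_le {ι : Type*}
    {V : ι → Submodule 𝕜 F} [∀ i, (V i).HasOrthogonalProjection]
    (hV : OrthogonalFamily 𝕜 (fun i => V i) fun i => (V i).subtypeₗᵢ) (z : F) :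
    ∑' i, ENNReal.ofReal (‖(V i).orthogonalProjectionOnto z‖ ^ 2) ≤ ENNReal.ofReal (‖z‖ ^ 2) := by
  rw [ENNReal.tsum_eq_iSup_sum]
  refine iSup_le fun s => ?_
  rw [← ENNReal.ofReal_sum_of_nonneg fun i _ => by positivity]
  exact ENNReal.ofReal_le_ofReal (hV.sum_norm_orthogonalProjectionOnto_sq_le z s)

theorem tsum_norm_inner_sq_le_encard_mul (K : Submodule 𝕜 F) [K.HasOrthogonalProjection]
    (z : F) {α : Type*} (e : α → F) (s : Set α) (hs : ∀ a ∈ s, e a ∈ K) (he₁ : ∀ a, ‖e a‖ ≤ 1) :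
    ∑' a : s, ENNReal.ofReal (‖inner 𝕜 z (e a)‖ ^ 2)
      ≤ s.encard * ENNReal.ofReal (‖K.orthogonalProjectionOnto z‖ ^ 2) := by
  rw [← ENNReal.tsum_set_const]
  refine ENNReal.tsum_le_tsum fun a => ENNReal.ofReal_le_ofReal ?_
  gcongr
  exact norm_inner_le_norm_orthogonalProjectionOnto K z (hs a a.2) (he₁ a)

end Projection

theorem ENNReal.tsum_le_tsum_of_iUnion_eq_univ {α ι : Type*} (f : α → ℝ≥0∞) {t : ι → Set α}
    (ht : ⋃ i, t i = Set.univ) : ∑' a, f a ≤ ∑' i, ∑' a : t i, f a := by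
  calc ∑' a, f a = ∑' a : (Set.univ : Set α), f a := tsum_univ f |>.symm
    _ ≤ ∑' a : ⋃ i, t i, f a := ENNReal.tsum_mono_subtype f ht.ge
    _ ≤ ∑' i, ∑' a : t i, f a := ENNReal.tsum_iUnion_le_tsum f t

theorem stmt1_general {H : Type*} [NormedAddCommGroup H] [InnerProductSpace ℂ H]
    (x : ℕ → H) (S : ℕ → Set ℕ)
    (hpart : ∀ n, ∃! i, n ∈ S i)
    (horth : ∀ i j, i ≠ j →
      ∀ u ∈ (Submodule.span ℂ (x '' S i)).topologicalClosure,
      ∀ v ∈ (Submodule.span ℂ (x '' S j)).topologicalClosure, ⟪u, v⟫ = 0)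
    (N : ℕ) (hcard : ∀ i, (S i).encard ≤ N) :
    BesselWith (normalizeSeq x) (N : ℝ) := by
  intro z
  set V : ℕ → Submodule ℂ H := fun i => Submodule.span ℂ (x '' S i)
  have hfin : ∀ i, FiniteDimensional ℂ (V i) := fun i =>
    .span_of_finite ℂ ((Set.finite_of_encard_le_coe (hcard i)).image x)
  have hV : OrthogonalFamily ℂ (fun i => V i) fun i => (V i).subtypeₗᵢ :=
    .of_pairwise fun i j hij => Submodule.isOrtho_iff_inner_eq.2 fun u hu v hv =>
      horth i j hij u (Submodule.le_topologicalClosure _ hu)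
        v (Submodule.le_topologicalClosure _ hv)
  have hmem : ∀ i, ∀ n ∈ S i, normalizeSeq x n ∈ V i := fun i n hn =>
    Submodule.smul_mem _ _ (Submodule.subset_span ⟨n, hn, rfl⟩)
  calc ∑' n, ENNReal.ofReal (‖⟪z, normalizeSeq x n⟫‖ ^ 2)
      ≤ ∑' i, ∑' n : S i, ENNReal.ofReal (‖⟪z, normalizeSeq x n⟫‖ ^ 2) :=
        ENNReal.tsum_le_tsum_of_iUnion_eq_univ _
          (Set.iUnion_eq_univ_iff.2 fun n => (hpart n).exists)
    _ ≤ ∑' i, (N : ℝ≥0∞) * ENNReal.ofReal (‖(V i).orthogonalProjectionOnto z‖ ^ 2) :=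
        ENNReal.tsum_le_tsum fun i =>
          (tsum_norm_inner_sq_le_encard_mul (V i) z _ (S i) (hmem i)
            (norm_normalizeSeq_le_one x)).trans (by gcongr; exact_mod_cast hcard i)
    _ = N * ∑' i, ENNReal.ofReal (‖(V i).orthogonalProjectionOnto z‖ ^ 2) := ENNReal.tsum_mul_left
    _ ≤ N * ENNReal.ofReal (‖z‖ ^ 2) := by
        gcongr; exact hV.tsum_norm_orthogonalProjectionOnto_sq_le z
    _ = ENNReal.ofReal (N * ‖z‖ ^ 2) := by
        rw [ENNReal.ofReal_mul (by positivity), ENNReal.ofReal_natCast]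

/-- A sequence of nonzero vectors admitting an orthogonal decomposition into
blocks of cardinality at most `N` normalizes to a Bessel sequence with bound `N`. -/
theorem stmt1 {H : Type*} [NormedAddCommGroup H] [InnerProductSpace ℂ H]
    (x : ℕ → H) (hx : ∀ n, x n ≠ 0) (S : ℕ → Set ℕ)
    (hpart : ∀ n, ∃! i, n ∈ S i)
    (horth : ∀ i j, i ≠ j →
      ∀ u ∈ (Submodule.span ℂ (x '' S i)).topologicalClosure,
      ∀ v ∈ (Submodule.span ℂ (x '' S j)).topologicalClosure, ⟪u, v⟫ = 0)
    (N : ℕ) (hcard : ∀ i, (S i).encard ≤ N) :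
    BesselWith (normalizeSeq x) (N : ℝ) :=
  stmt1_general x S hpart horth N hcard
end
end

section
/- Let {x_n} be a sequence of nonzero vectors in H admitting an orthogonal decomposition {x_n} = ∪_i {x_n^i} with mutually orthogonal closed spans, such that sup_i dim(span-closure{x_n^i}) < ∞. If sup_i |{x_n^i}| = ∞ (the cardinalities of the blocks are unbounded), then {x_n/‖x_n‖} is not a Bessel sequence. -/
open scoped ComplexInnerProductSpace ENNReal
open Filter Topology

noncomputable section

variable {E : Type*} [NormedAddCommGroup E] [InnerProductSpace ℂ E]

/-!
A Bessel sequence with bound `B` has at most `B · dim V` unit vectors in any finite-dimensional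
subspace `V`: summing the Bessel inequality over an orthonormal basis `(e_k)` of `V` gives
`∑_k ∑_n |⟪e_k, y_n⟫|² ≤ B · dim V`, while by Parseval each unit vector `y_n ∈ V` contributes
exactly `∑_k |⟪e_k, y_n⟫|² = 1`. A block of the decomposition is such a subspace, of dimension
at most `D`, so its cardinality is at most `B · D`; blocks of unbounded cardinality rule out
every Bessel bound.
-/

theorem BesselWith.sum_le {ι : Type*} {y : ι → E} {B : ℝ} (hB : BesselWith y B) (z : E)
    (T : Finset ι) :
    ∑ n ∈ T, ENNReal.ofReal (‖⟪z, y n⟫‖ ^ 2) ≤ ENNReal.ofReal (B * ‖z‖ ^ 2) :=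
  (ENNReal.sum_le_tsum T).trans (hB z)

theorem BesselWith.card_le_finrank_mul {ι : Type*} {y : ι → E} {B : ℝ} (hB : BesselWith y B)
    (V : Submodule ℂ E) [FiniteDimensional ℂ V] (T : Finset ι)
    (hTV : ∀ n ∈ T, y n ∈ V) (hT1 : ∀ n ∈ T, ‖y n‖ = 1) :
    (T.card : ℝ≥0∞) ≤ Module.finrank ℂ V * ENNReal.ofReal B := by
  set b := stdOrthonormalBasis ℂ V
  have parseval : ∀ n ∈ T, ∑ k, ENNReal.ofReal (‖⟪(b k : E), y n⟫‖ ^ 2) = 1 := by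
    intro n hn
    have h := b.sum_sq_norm_inner_right ⟨y n, hTV n hn⟩
    rw [← ENNReal.ofReal_sum_of_nonneg fun _ _ ↦ by positivity]
    rw [Submodule.coe_norm, hT1 n hn, one_pow] at h
    exact h ▸ ENNReal.ofReal_one
  have bessel : ∀ k, ∑ n ∈ T, ENNReal.ofReal (‖⟪(b k : E), y n⟫‖ ^ 2) ≤ ENNReal.ofReal B := by
    intro k
    have hk : ‖(b k : E)‖ = 1 := b.orthonormal.1 k
    simpa [hk] using hB.sum_le (b k : E) T
  calc (T.card : ℝ≥0∞)
      = ∑ n ∈ T, ∑ k, ENNReal.ofReal (‖⟪(b k : E), y n⟫‖ ^ 2) := by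
        rw [Finset.sum_congr rfl parseval, Finset.sum_const, nsmul_one]
    _ = ∑ k, ∑ n ∈ T, ENNReal.ofReal (‖⟪(b k : E), y n⟫‖ ^ 2) := Finset.sum_comm
    _ ≤ ∑ _k : Fin (Module.finrank ℂ V), ENNReal.ofReal B := Finset.sum_le_sum fun k _ ↦ bessel k
    _ = Module.finrank ℂ V * ENNReal.ofReal B := by simp

theorem norm_normalizeSeq {ι : Type*} {y : ι → E} {n : ι} (hy : y n ≠ 0) :
    ‖normalizeSeq y n‖ = 1 := by
  simp [normalizeSeq, norm_smul, hy]

theorem normalizeSeq_mem_span {ι : Type*} (y : ι → E) {s : Set ι} {n : ι} (hn : n ∈ s) :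
    normalizeSeq y n ∈ Submodule.span ℂ (y '' s) :=
  Submodule.smul_mem _ _ (Submodule.subset_span ⟨n, hn, rfl⟩)

theorem Set.exists_finset_subset_card_eq {α : Type*} {s : Set α} {K : ℕ}
    (hK : (K : ℕ∞) ≤ s.encard) : ∃ T : Finset α, ↑T ⊆ s ∧ T.card = K := by
  obtain ⟨t, hts, htK⟩ := Set.exists_subset_encard_eq hK
  have ht : t.Finite := Set.finite_of_encard_eq_coe htK
  refine ⟨ht.toFinset, by simpa using hts, ?_⟩
  rw [ht.encard_eq_coe_toFinset_card] at htK
  exact_mod_cast htK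

theorem stmt2_general {H : Type*} [NormedAddCommGroup H] [InnerProductSpace ℂ H]
    (x : ℕ → H) (hx : ∀ n, x n ≠ 0) (S : ℕ → Set ℕ)
    (D : ℕ) (hfd : ∀ i, FiniteDimensional ℂ (Submodule.span ℂ (x '' S i)))
    (hdim : ∀ i, Module.finrank ℂ (Submodule.span ℂ (x '' S i)) ≤ D)
    (hunb : ∀ K : ℕ, ∃ i, (K : ℕ∞) ≤ (S i).encard) :
    ¬ ∃ B : ℝ, BesselWith (normalizeSeq x) B := by
  rintro ⟨B, hB⟩
  obtain ⟨i, hi⟩ := hunb (D * ⌈B⌉₊ + 1)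
  obtain ⟨T, hTS, hTcard⟩ := Set.exists_finset_subset_card_eq hi
  have hle := hB.card_le_finrank_mul _ T (fun n hn ↦ normalizeSeq_mem_span x (hTS hn))
    (fun n _ ↦ norm_normalizeSeq (hx n))
  have hBceil : ENNReal.ofReal B ≤ ⌈B⌉₊ :=
    ENNReal.ofReal_le_of_le_toReal (by simpa using Nat.le_ceil B)
  have hcard : ((D * ⌈B⌉₊ + 1 : ℕ) : ℝ≥0∞) ≤ ((D * ⌈B⌉₊ : ℕ) : ℝ≥0∞) := by
    rw [← hTcard, Nat.cast_mul]
    exact hle.trans (mul_le_mul' (by exact_mod_cast hdim i) hBceil)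
  norm_cast at hcard
  omega

/-- If a sequence of nonzero vectors admits an orthogonal decomposition whose
blocks span subspaces of uniformly bounded dimension but whose block cardinalities are
unbounded, then the normalized sequence is not a Bessel sequence. -/
theorem stmt2 {H : Type*} [NormedAddCommGroup H] [InnerProductSpace ℂ H]
    (x : ℕ → H) (hx : ∀ n, x n ≠ 0) (S : ℕ → Set ℕ)
    (hpart : ∀ n, ∃! i, n ∈ S i)
    (horth : ∀ i j, i ≠ j →
      ∀ u ∈ (Submodule.span ℂ (x '' S i)).topologicalClosure,
      ∀ v ∈ (Submodule.span ℂ (x '' S j)).topologicalClosure, ⟪u, v⟫ = 0)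
    (D : ℕ) (hfd : ∀ i, FiniteDimensional ℂ (Submodule.span ℂ (x '' S i)))
    (hdim : ∀ i, Module.finrank ℂ (Submodule.span ℂ (x '' S i)) ≤ D)
    (hunb : ∀ K : ℕ, ∃ i, (K : ℕ∞) ≤ (S i).encard) :
    ¬ ∃ B : ℝ, BesselWith (normalizeSeq x) B :=
  stmt2_general x hx S D hfd hdim hunb
end
end

section
/- Let {x_n} be a frame for H. If the normalized sequence {x_n/‖x_n‖} is a Bessel sequence, then {x_n/‖x_n‖} is a frame for H; i.e., a frame is frame-normalizable if and only if it is Bessel-normalizable. -/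
open scoped ComplexInnerProductSpace ENNReal
open Filter Topology

noncomputable section

variable {E : Type*} [NormedAddCommGroup E] [InnerProductSpace ℂ E]

/-- If a frame is Bessel-normalizable then it is frame-normalizable. -/
theorem stmt4 {H : Type*} [NormedAddCommGroup H] [InnerProductSpace ℂ H] [CompleteSpace H]
    (x : ℕ → H) (hx : ∀ n, x n ≠ 0)
    (hframe : ∃ A B : ℝ, FrameWith x A B)
    (hbessel : ∃ C : ℝ, BesselWith (normalizeSeq x) C) :
    ∃ A' B' : ℝ, FrameWith (normalizeSeq x) A' B' := by
  obtain ⟨A, B, hA, hAB, hlow, hup⟩ := hframe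
  obtain ⟨C, hC⟩ := hbessel
  have hB : (0:ℝ) < B := lt_of_lt_of_le hA hAB
  -- each ‖x n‖² ≤ B
  have hnormle : ∀ n, ‖x n‖ ^ 2 ≤ B := by
    intro n
    have h1 : ENNReal.ofReal (‖⟪x n, x n⟫‖ ^ 2) ≤ ENNReal.ofReal (B * ‖x n‖ ^ 2) :=
      le_trans (ENNReal.le_tsum n) (hup (x n))
    have h2 : ‖⟪x n, x n⟫‖ ^ 2 ≤ B * ‖x n‖ ^ 2 := by
      rw [ENNReal.ofReal_le_ofReal_iff (by positivity)] at h1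
      exact h1
    have h3 : ‖⟪x n, x n⟫‖ = ‖x n‖ ^ 2 := by
      rw [inner_self_eq_norm_sq_to_K]
      simp [Complex.norm_real]
    rw [h3] at h2
    have hxn : (0:ℝ) < ‖x n‖ ^ 2 := pow_pos (norm_pos_iff.mpr (hx n)) 2
    nlinarith
  have hnormpos : ∀ n, (0:ℝ) < ‖x n‖ := fun n => norm_pos_iff.mpr (hx n)
  -- inner products with normalized sequence
  have hinner : ∀ (z : H) (i : ℕ),
      ‖⟪z, normalizeSeq x i⟫‖ ^ 2 = (‖x i‖⁻¹) ^ 2 * ‖⟪z, x i⟫‖ ^ 2 := by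
    intro z i
    simp only [normalizeSeq, inner_smul_right]
    rw [norm_mul, mul_pow]
    congr 1
    rw [norm_inv]
    simp [Complex.norm_real, abs_of_nonneg (norm_nonneg (x i))]
  refine ⟨A / B, max C (A / B), by positivity, le_max_right _ _, ?_, ?_⟩
  · -- lower frame
    intro z
    have key : ∀ i, ENNReal.ofReal B⁻¹ * ENNReal.ofReal (‖⟪z, x i⟫‖ ^ 2) ≤
        ENNReal.ofReal (‖⟪z, normalizeSeq x i⟫‖ ^ 2) := by
      intro i
      rw [← ENNReal.ofReal_mul (by positivity), hinner z i]
      apply ENNReal.ofReal_le_ofReal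
      apply mul_le_mul_of_nonneg_right _ (by positivity)
      have hxi : (0:ℝ) < ‖x i‖ ^ 2 := pow_pos (hnormpos i) 2
      rw [inv_pow]
      exact inv_anti₀ hxi (hnormle i)
    calc ENNReal.ofReal (A / B * ‖z‖ ^ 2)
        = ENNReal.ofReal B⁻¹ * ENNReal.ofReal (A * ‖z‖ ^ 2) := by
          rw [← ENNReal.ofReal_mul (by positivity)]; ring_nf
      _ ≤ ENNReal.ofReal B⁻¹ * ∑' i, ENNReal.ofReal (‖⟪z, x i⟫‖ ^ 2) := by
          exact mul_le_mul_right (hlow z) _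
      _ = ∑' i, ENNReal.ofReal B⁻¹ * ENNReal.ofReal (‖⟪z, x i⟫‖ ^ 2) := by
          rw [ENNReal.tsum_mul_left]
      _ ≤ ∑' i, ENNReal.ofReal (‖⟪z, normalizeSeq x i⟫‖ ^ 2) :=
          ENNReal.tsum_le_tsum key
  · -- upper (Bessel)
    intro z
    refine le_trans (hC z) (ENNReal.ofReal_le_ofReal ?_)
    exact mul_le_mul_of_nonneg_right (le_max_left _ _) (by positivity)
end
end

section
/- Let {x_n} be a frame for H with analysis operator C : H → ℓ², C(x) = (⟨x, x_n⟩), and let α = (1/‖x_n‖). If Range(C) ⊆ Dom(D_α), where D_α is the diagonal operator (d_n) ↦ (α_n d_n) defined on {(d_n) : (α_n d_n) ∈ ℓ²}, then {x_n/‖x_n‖} is a Bessel sequence (hence a frame) for H. -/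
open scoped ComplexInnerProductSpace ENNReal
open Filter Topology

noncomputable section

variable {E : Type*} [NormedAddCommGroup E] [InnerProductSpace ℂ E]

/-! The coefficient map `z ↦ (⟪xₙ, z⟫/‖xₙ‖)ₙ` is, by hypothesis, defined on all of `H` with values
in `ℓ²`; its graph is closed because every coordinate is continuous, so the closed graph theorem
makes it bounded, and its squared norm is a Bessel bound for `xₙ/‖xₙ‖`. For the lower bound, a
Bessel bound `B` of `x` forces `‖xₙ‖² ≤ B` (test it at `z = xₙ`), so normalizing multiplies every
`|⟪z, xₙ⟫|²` by at least `B⁻¹` and `A/B` is a lower frame bound. -/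

open scoped lp

theorem lp.tsum_ofReal_norm_sq {ι : Type*} {G : ι → Type*} [∀ i, NormedAddCommGroup (G i)]
    (f : lp G 2) : ∑' i, ENNReal.ofReal (‖f i‖ ^ 2) = ENNReal.ofReal (‖f‖ ^ 2) := by
  have h := lp.hasSum_norm (p := 2) (by norm_num) f
  simp only [ENNReal.toReal_ofNat, Real.rpow_two] at h
  exact (ENNReal.ofReal_tsum_of_nonneg (fun i => sq_nonneg _) h.summable).symm.trans
    (congrArg ENNReal.ofReal h.tsum_eq)

section

variable {ι : Type*}

theorem BesselWith.mono {y : ι → E} {B B' : ℝ} (h : BesselWith y B) (hB : B ≤ B') :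
    BesselWith y B' := fun z =>
  (h z).trans (ENNReal.ofReal_le_ofReal (mul_le_mul_of_nonneg_right hB (sq_nonneg _)))

theorem BesselWith.of_continuousLinearMap {y : ι → E} (T : E →L[ℂ] ℓ²(ι, ℂ))
    (hT : ∀ z i, ‖T z i‖ = ‖⟪z, y i⟫‖) : BesselWith y (‖T‖ ^ 2) := fun z =>
  calc ∑' i, ENNReal.ofReal (‖⟪z, y i⟫‖ ^ 2)
      = ENNReal.ofReal (‖T z‖ ^ 2) := by simp only [← hT, lp.tsum_ofReal_norm_sq]
    _ ≤ ENNReal.ofReal (‖T‖ ^ 2 * ‖z‖ ^ 2) := by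
      rw [← mul_pow]
      exact ENNReal.ofReal_le_ofReal (pow_le_pow_left₀ (norm_nonneg _) (T.le_opNorm z) 2)

theorem exists_besselWith_of_memℓp [CompleteSpace E] {y : ι → E}
    (h : ∀ z, Memℓp (fun i => ⟪z, y i⟫) 2) : ∃ B, BesselWith y B := by
  have hmem (z : E) : Memℓp (fun i => ⟪y i, z⟫) 2 := by
    rw [← memℓp_norm_iff]
    simpa only [norm_inner_symm] using (h z).norm
  let g : E →ₗ[ℂ] ℓ²(ι, ℂ) :=
    { toFun := fun z => ⟨fun i => ⟪y i, z⟫, hmem z⟩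
      map_add' := fun a b => lp.ext <| funext fun i => inner_add_right _ _ _
      map_smul' := fun c a => lp.ext <| funext fun i => inner_smul_right _ _ _ }
  have hg : Continuous g := g.continuous_of_seq_closed_graph fun u z f hu hgu => by
    ext i
    have hcoord := ((lp.evalCLM ℂ (fun _ : ι => ℂ) 2 i).continuous.tendsto f).comp hgu
    exact tendsto_nhds_unique hcoord (((innerSL ℂ (y i)).continuous.tendsto z).comp hu)
  exact ⟨_, BesselWith.of_continuousLinearMap ⟨g, hg⟩ fun z i => norm_inner_symm _ _⟩

theorem BesselWith.norm_sq_le {y : ι → E} {B : ℝ} (h : BesselWith y B) (hB : 0 ≤ B) (i : ι) :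
    ‖y i‖ ^ 2 ≤ B := by
  have hi := (ENNReal.le_tsum i).trans (h (y i))
  rw [inner_self_eq_norm_sq_to_K, norm_pow, RCLike.norm_ofReal, abs_norm,
    ENNReal.ofReal_le_ofReal_iff (by positivity)] at hi
  nlinarith

theorem norm_inner_normalizeSeq (y : ι → E) (z : E) (i : ι) :
    ‖⟪z, normalizeSeq y i⟫‖ = ‖⟪z, y i⟫‖ / ‖y i‖ := by
  rw [normalizeSeq, inner_smul_right, norm_mul, norm_inv, Complex.norm_real, norm_norm,
    inv_mul_eq_div]

theorem LowerFrameWith.normalizeSeq {y : ι → E} {A B : ℝ} (h : LowerFrameWith y A) (hB : 0 < B)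
    (hy : ∀ i, ‖y i‖ ^ 2 ≤ B) : LowerFrameWith (normalizeSeq y) (A / B) := by
  intro z
  have hpt (i : ι) : B⁻¹ * ‖⟪z, y i⟫‖ ^ 2 ≤ ‖⟪z, _root_.normalizeSeq y i⟫‖ ^ 2 := by
    rw [norm_inner_normalizeSeq, div_pow, ← inv_mul_eq_div]
    rcases eq_or_ne (y i) 0 with hi | hi
    · simp [hi]
    · exact mul_le_mul_of_nonneg_right (inv_anti₀ (by positivity) (hy i)) (sq_nonneg _)
  calc ENNReal.ofReal (A / B * ‖z‖ ^ 2)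
      = ENNReal.ofReal B⁻¹ * ENNReal.ofReal (A * ‖z‖ ^ 2) := by
        rw [← ENNReal.ofReal_mul (by positivity), div_eq_inv_mul, mul_assoc]
    _ ≤ ENNReal.ofReal B⁻¹ * ∑' i, ENNReal.ofReal (‖⟪z, y i⟫‖ ^ 2) := by gcongr; exact h z
    _ = ∑' i, ENNReal.ofReal (B⁻¹ * ‖⟪z, y i⟫‖ ^ 2) := by
        simp only [← ENNReal.tsum_mul_left, ← ENNReal.ofReal_mul (inv_nonneg.2 hB.le)]
    _ ≤ ∑' i, ENNReal.ofReal (‖⟪z, _root_.normalizeSeq y i⟫‖ ^ 2) :=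
        ENNReal.tsum_le_tsum fun i => ENNReal.ofReal_le_ofReal (hpt i)

theorem FrameWith.normalizeSeq {y : ι → E} {A B C : ℝ} (h : FrameWith y A B)
    (hC : BesselWith (normalizeSeq y) C) :
    FrameWith (normalizeSeq y) (A / B) (max C (A / B)) := by
  obtain ⟨hA, hAB, hlow, hbes⟩ := h
  have hB : 0 < B := hA.trans_le hAB
  exact ⟨div_pos hA hB, le_max_right _ _, hlow.normalizeSeq hB (hbes.norm_sq_le hB.le),
    hC.mono (le_max_left _ _)⟩

end

theorem stmt5_general {H : Type*} [NormedAddCommGroup H] [InnerProductSpace ℂ H] [CompleteSpace H]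
    (x : ℕ → H)
    (hframe : ∃ A B : ℝ, FrameWith x A B)
    (hdom : ∀ z : H, Memℓp (fun n => (‖x n‖ : ℂ)⁻¹ * ⟪z, x n⟫) 2) :
    (∃ C : ℝ, BesselWith (normalizeSeq x) C) ∧ ∃ A' B' : ℝ, FrameWith (normalizeSeq x) A' B' := by
  obtain ⟨A, B, hframe⟩ := hframe
  have hdom' (z : H) : Memℓp (fun n => ⟪z, normalizeSeq x n⟫) 2 := by
    simp only [normalizeSeq, inner_smul_right]
    exact hdom z
  obtain ⟨C, hC⟩ := exists_besselWith_of_memℓp hdom'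
  exact ⟨⟨C, hC⟩, A / B, max C (A / B), hframe.normalizeSeq hC⟩

/-- If `{x_n}` is a frame whose analysis operator has range contained in the
domain of the diagonal operator `D_α` with `α_n = 1/‖x_n‖` (i.e. for every `z` the sequence
`(⟪z, x_n⟫/‖x_n‖)` is in `ℓ²`), then the normalized sequence is a Bessel sequence, and in
fact a frame for `H`. -/
theorem stmt5 {H : Type*} [NormedAddCommGroup H] [InnerProductSpace ℂ H] [CompleteSpace H]
    (x : ℕ → H) (hx : ∀ n, x n ≠ 0)
    (hframe : ∃ A B : ℝ, FrameWith x A B)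
    (hdom : ∀ z : H, Memℓp (fun n => (‖x n‖ : ℂ)⁻¹ * ⟪z, x n⟫) 2) :
    (∃ C : ℝ, BesselWith (normalizeSeq x) C) ∧ ∃ A' B' : ℝ, FrameWith (normalizeSeq x) A' B' :=
  stmt5_general x hframe hdom
end
end

section
/- If {x_n} is a normalizable frame for H (i.e., {x_n} is a frame and {x_n/‖x_n‖} is a frame), then {x_n} contains a subsequence that is a frame for H and is norm-bounded below. -/
open scoped ComplexInnerProductSpace ENNReal
open Filter Topology

noncomputable section

variable {E : Type*} [NormedAddCommGroup E] [InnerProductSpace ℂ E]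

/-- A normalizable frame contains a subsequence (a subfamily indexed by a subset
of the indices) that is a frame for `H` and is norm-bounded below. -/
theorem stmt6 {H : Type*} [NormedAddCommGroup H] [InnerProductSpace ℂ H] [CompleteSpace H]
    (hinf : ¬ FiniteDimensional ℂ H)
    (x : ℕ → H) (hx : ∀ n, x n ≠ 0)
    (hframe : ∃ A B : ℝ, FrameWith x A B)
    (hnorm : ∃ A' B' : ℝ, FrameWith (normalizeSeq x) A' B') :
    ∃ s : Set ℕ, (∃ m > (0 : ℝ), ∀ n ∈ s, m ≤ ‖x n‖) ∧
      ∃ A'' B'' : ℝ, FrameWith (fun n : s => x n.1) A'' B'' := by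
  obtain ⟨A, B, hA, hAB, hlow, hbes⟩ := hframe
  obtain ⟨A', B', hA', hA'B', hlow', hbes'⟩ := hnorm
  have hB' : 0 < B' := lt_of_lt_of_le hA' hA'B'
  set m : ℝ := Real.sqrt (A / (2 * B')) with hm_def
  have hm : 0 < m := Real.sqrt_pos.2 (by positivity)
  have hm2 : m ^ 2 = A / (2 * B') := Real.sq_sqrt (by positivity)
  -- key identity
  have hkey : ∀ (z : H) (n : ℕ), ‖⟪z, x n⟫‖ = ‖x n‖ * ‖⟪z, normalizeSeq x n⟫‖ := by
    intro z n
    have hxn : (0 : ℝ) < ‖x n‖ := norm_pos_iff.2 (hx n)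
    simp only [normalizeSeq, inner_smul_right, norm_mul]
    rw [norm_inv, Complex.norm_real, Real.norm_eq_abs, abs_of_pos hxn]
    field_simp
  refine ⟨{n | m ≤ ‖x n‖}, ⟨m, hm, fun n hn => hn⟩, A / 2, B, by positivity, by linarith,
    ?_, ?_⟩
  · -- lower frame condition
    intro z
    set f : ℕ → ℝ≥0∞ := fun n => ENNReal.ofReal (‖⟪z, x n⟫‖ ^ 2) with hf
    have hsplit : (∑' n : {n | m ≤ ‖x n‖}, f n) + ∑' n : ↥{n | m ≤ ‖x n‖}ᶜ, f n
        = ∑' n, f n :=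
      Summable.tsum_add_tsum_compl ENNReal.summable ENNReal.summable
    have hcompl : (∑' n : ↥{n | m ≤ ‖x n‖}ᶜ, f n) ≤ ENNReal.ofReal (A / 2 * ‖z‖ ^ 2) := by
      have hpt : ∀ n : ↥{n | m ≤ ‖x n‖}ᶜ,
          f n ≤ ENNReal.ofReal (m ^ 2) *
            ENNReal.ofReal (‖⟪z, normalizeSeq x n.1⟫‖ ^ 2) := by
        intro n
        have hn : ¬ (m ≤ ‖x n.1‖) := n.2
        push_neg at hn
        rw [← ENNReal.ofReal_mul (by positivity)]
        apply ENNReal.ofReal_le_ofReal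
        rw [hkey z n.1, mul_pow]
        have : ‖x n.1‖ ^ 2 ≤ m ^ 2 := by
          apply pow_le_pow_left₀ (norm_nonneg _) hn.le
        nlinarith [sq_nonneg ‖⟪z, normalizeSeq x n.1⟫‖]
      calc (∑' n : ↥{n | m ≤ ‖x n‖}ᶜ, f n)
          ≤ ∑' n : ↥{n | m ≤ ‖x n‖}ᶜ, ENNReal.ofReal (m ^ 2) *
              ENNReal.ofReal (‖⟪z, normalizeSeq x n.1⟫‖ ^ 2) :=
            ENNReal.tsum_le_tsum hpt
        _ = ENNReal.ofReal (m ^ 2) *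
              ∑' n : ↥{n | m ≤ ‖x n‖}ᶜ, ENNReal.ofReal (‖⟪z, normalizeSeq x n.1⟫‖ ^ 2) :=
            ENNReal.tsum_mul_left
        _ ≤ ENNReal.ofReal (m ^ 2) *
              ∑' n, ENNReal.ofReal (‖⟪z, normalizeSeq x n⟫‖ ^ 2) := by
            gcongr
            exact ENNReal.tsum_comp_le_tsum_of_injective Subtype.coe_injective _
        _ ≤ ENNReal.ofReal (m ^ 2) * ENNReal.ofReal (B' * ‖z‖ ^ 2) := by
            gcongr; exact hbes' z
        _ = ENNReal.ofReal (A / 2 * ‖z‖ ^ 2) := by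
            rw [← ENNReal.ofReal_mul (by positivity)]
            congr 1
            rw [hm2]
            field_simp
    have hsum : ENNReal.ofReal (A / 2 * ‖z‖ ^ 2) + ENNReal.ofReal (A / 2 * ‖z‖ ^ 2)
        ≤ (∑' n : {n | m ≤ ‖x n‖}, f n) + ENNReal.ofReal (A / 2 * ‖z‖ ^ 2) := by
      rw [← ENNReal.ofReal_add (by positivity) (by positivity)]
      have hAz : A / 2 * ‖z‖ ^ 2 + A / 2 * ‖z‖ ^ 2 = A * ‖z‖ ^ 2 := by ring
      rw [hAz]
      calc ENNReal.ofReal (A * ‖z‖ ^ 2) ≤ ∑' n, f n := hlow z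
        _ = (∑' n : {n | m ≤ ‖x n‖}, f n) + ∑' n : ↥{n | m ≤ ‖x n‖}ᶜ, f n := hsplit.symm
        _ ≤ (∑' n : {n | m ≤ ‖x n‖}, f n) + ENNReal.ofReal (A / 2 * ‖z‖ ^ 2) := by
            gcongr
    exact (ENNReal.add_le_add_iff_right ENNReal.ofReal_ne_top).1 hsum
  · -- Bessel condition
    intro z
    calc (∑' n : {n | m ≤ ‖x n‖}, ENNReal.ofReal (‖⟪z, x n.1⟫‖ ^ 2))
        ≤ ∑' n, ENNReal.ofReal (‖⟪z, x n⟫‖ ^ 2) := by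
          exact ENNReal.tsum_comp_le_tsum_of_injective Subtype.coe_injective _
      _ ≤ ENNReal.ofReal (B * ‖z‖ ^ 2) := hbes z
end
end

section
/- Let {x_n} be a frame for H, {x_n/‖x_n‖} a Bessel sequence with bound C, and A a lower frame bound for {x_n}. Then for every δ > 0 such that the subfamily {x_n : ‖x_n‖ ≥ δ} fails the lower frame inequality with bound A/2, one has C > A/(2δ²). Consequently, there exists δ > 0 such that {x_n : ‖x_n‖ ≥ δ} is a frame for H. -/
open scoped ComplexInnerProductSpace ENNReal
open Filter Topology

noncomputable section

variable {E : Type*} [NormedAddCommGroup E] [InnerProductSpace ℂ E]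

lemma norm_inner_normalize {ι : Type*} (y : ι → E) (i : ι) (h : y i ≠ 0) (z : E) :
    ‖⟪z, y i⟫‖ = ‖y i‖ * ‖⟪z, normalizeSeq y i⟫‖ := by
  have hn : (0:ℝ) < ‖y i‖ := norm_pos_iff.mpr h
  simp only [normalizeSeq, inner_smul_right]
  rw [norm_mul]
  have h2 : ‖((‖y i‖ : ℂ))⁻¹‖ = ‖y i‖⁻¹ := by
    rw [norm_inv, Complex.norm_real, Real.norm_of_nonneg hn.le]
  rw [h2]
  field_simp

/-- If `{x_n}` is a frame with lower bound `A` whose normalization is Bessel with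
bound `C`, then for every `δ > 0` such that `{x_n : ‖x_n‖ ≥ δ}` fails the lower frame
inequality with bound `A/2` one has `C > A/(2δ²)`; consequently there is `δ > 0` such that
`{x_n : ‖x_n‖ ≥ δ}` is a frame for `H`. -/
theorem stmt7 {H : Type*} [NormedAddCommGroup H] [InnerProductSpace ℂ H]
    (x : ℕ → H) (hx : ∀ n, x n ≠ 0) (A B C : ℝ)
    (hframe : FrameWith x A B)
    (hC : BesselWith (normalizeSeq x) C) :
    (∀ δ : ℝ, 0 < δ →
      (∃ z : H, z ≠ 0 ∧
        ∑' n : {n : ℕ // δ ≤ ‖x n‖}, ENNReal.ofReal (‖⟪z, x n.1⟫‖ ^ 2)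
          < ENNReal.ofReal ((A / 2) * ‖z‖ ^ 2)) →
      C > A / (2 * δ ^ 2)) ∧
    ∃ δ > (0 : ℝ), ∃ A' B' : ℝ,
      FrameWith (fun n : {n : ℕ // δ ≤ ‖x n‖} => x n.1) A' B' := by
  obtain ⟨hA, hAB, hlow, hbes⟩ := hframe
  have hC1 : (1:ℝ) ≤ C := by
    have h0 := hC (normalizeSeq x 0)
    have hnn : (0:ℝ) < ‖x 0‖ := norm_pos_iff.mpr (hx 0)
    have hn0 : ‖normalizeSeq x 0‖ = 1 := by
      simp [normalizeSeq, norm_smul, Complex.norm_real, Real.norm_of_nonneg hnn.le,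
        inv_mul_cancel₀ hnn.ne']
    have hinner : ‖⟪normalizeSeq x 0, normalizeSeq x 0⟫‖ = 1 := by
      rw [inner_self_eq_norm_sq_to_K (𝕜 := ℂ), hn0]
      norm_num
    have hterm : (1 : ℝ≥0∞) ≤
        ∑' i, ENNReal.ofReal (‖⟪normalizeSeq x 0, normalizeSeq x i⟫‖ ^ 2) := by
      refine le_trans ?_ (ENNReal.le_tsum 0)
      rw [hinner]
      norm_num
    have h1 : (1 : ℝ≥0∞) ≤ ENNReal.ofReal (C * ‖normalizeSeq x 0‖ ^ 2) := hterm.trans h0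
    rw [hn0] at h1
    simpa using ENNReal.one_le_ofReal.mp h1
  have key : ∀ δ : ℝ, 0 < δ →
      (∃ z : H, z ≠ 0 ∧
        ∑' n : {n : ℕ // δ ≤ ‖x n‖}, ENNReal.ofReal (‖⟪z, x n.1⟫‖ ^ 2)
          < ENNReal.ofReal ((A / 2) * ‖z‖ ^ 2)) →
      C > A / (2 * δ ^ 2) := by
    rintro δ hδ ⟨z, hz, hlt⟩
    set f : ℕ → ℝ≥0∞ := fun n => ENNReal.ofReal (‖⟪z, x n⟫‖ ^ 2) with hf
    set S : Set ℕ := {n | δ ≤ ‖x n‖} with hS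
    have hsplit : ∑' (n : S), f n + ∑' (n : ↥Sᶜ), f n = ∑' n, f n :=
      Summable.tsum_add_tsum_compl (f := f) ENNReal.summable ENNReal.summable
    have hcompl : ∑' (n : ↥Sᶜ), f n ≤ ENNReal.ofReal (δ ^ 2 * (C * ‖z‖ ^ 2)) := by
      have hbd : ∀ n : ↥Sᶜ,
          f n ≤ ENNReal.ofReal (δ ^ 2) * ENNReal.ofReal (‖⟪z, normalizeSeq x n.1⟫‖ ^ 2) := by
        rintro ⟨n, hn⟩
        have hn' : ‖x n‖ < δ := lt_of_not_ge hn
        have hnn : (0:ℝ) < ‖x n‖ := norm_pos_iff.mpr (hx n)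
        rw [← ENNReal.ofReal_mul (by positivity)]
        apply ENNReal.ofReal_le_ofReal
        simp only [hf]
        rw [norm_inner_normalize x n (hx n) z, mul_pow]
        exact mul_le_mul_of_nonneg_right (by nlinarith) (sq_nonneg _)
      calc ∑' (n : ↥Sᶜ), f n
          ≤ ∑' (n : ↥Sᶜ), ENNReal.ofReal (δ ^ 2) * ENNReal.ofReal (‖⟪z, normalizeSeq x n.1⟫‖ ^ 2) :=
            ENNReal.tsum_le_tsum hbd
        _ = ENNReal.ofReal (δ ^ 2) * ∑' (n : ↥Sᶜ), ENNReal.ofReal (‖⟪z, normalizeSeq x n.1⟫‖ ^ 2) :=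
            ENNReal.tsum_mul_left
        _ ≤ ENNReal.ofReal (δ ^ 2) * ∑' n, ENNReal.ofReal (‖⟪z, normalizeSeq x n⟫‖ ^ 2) := by
            gcongr
            exact ENNReal.tsum_comp_le_tsum_of_injective Subtype.val_injective _
        _ ≤ ENNReal.ofReal (δ ^ 2) * ENNReal.ofReal (C * ‖z‖ ^ 2) := by gcongr; exact hC z
        _ = ENNReal.ofReal (δ ^ 2 * (C * ‖z‖ ^ 2)) := (ENNReal.ofReal_mul (by positivity)).symm
    have hmain : ENNReal.ofReal (A * ‖z‖ ^ 2)
        < ENNReal.ofReal (A / 2 * ‖z‖ ^ 2 + δ ^ 2 * (C * ‖z‖ ^ 2)) := by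
      calc ENNReal.ofReal (A * ‖z‖ ^ 2) ≤ ∑' n, f n := hlow z
        _ = ∑' (n : S), f n + ∑' (n : ↥Sᶜ), f n := hsplit.symm
        _ < ENNReal.ofReal (A / 2 * ‖z‖ ^ 2) + ENNReal.ofReal (δ ^ 2 * (C * ‖z‖ ^ 2)) :=
            ENNReal.add_lt_add_of_lt_of_le
              (ne_top_of_le_ne_top ENNReal.ofReal_ne_top hcompl) hlt hcompl
        _ = ENNReal.ofReal (A / 2 * ‖z‖ ^ 2 + δ ^ 2 * (C * ‖z‖ ^ 2)) :=
            (ENNReal.ofReal_add (mul_nonneg (by linarith) (sq_nonneg _)) (mul_nonneg (sq_nonneg _) (mul_nonneg (by linarith) (sq_nonneg _)))).symm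
    have hzn : (0:ℝ) < ‖z‖ := norm_pos_iff.mpr hz
    have hre : A * ‖z‖ ^ 2 < A / 2 * ‖z‖ ^ 2 + δ ^ 2 * (C * ‖z‖ ^ 2) :=
      (ENNReal.ofReal_lt_ofReal_iff_of_nonneg (by positivity)).mp hmain
    have h2 : A / 2 < δ ^ 2 * C := by nlinarith
    rw [gt_iff_lt, div_lt_iff₀ (by positivity)]
    nlinarith
  refine ⟨key, ?_⟩
  have hCpos : (0:ℝ) < C := by linarith
  set δ : ℝ := Real.sqrt (A / (2 * C)) with hδdef
  have hfrac : (0:ℝ) < A / (2 * C) := by positivity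
  have hδ : (0:ℝ) < δ := Real.sqrt_pos.mpr hfrac
  have hδsq : δ ^ 2 = A / (2 * C) := Real.sq_sqrt hfrac.le
  have hAC : A / (2 * δ ^ 2) = C := by
    rw [hδsq]; field_simp
  refine ⟨δ, hδ, A / 2, B, by positivity, by linarith, ?_, ?_⟩
  · -- lower frame bound A/2 for the subfamily
    intro z
    by_contra h
    push_neg at h
    have hz : z ≠ 0 := by
      rintro rfl
      simp at h
    have := key δ hδ ⟨z, hz, h⟩
    rw [hAC] at this
    exact lt_irrefl _ this
  · intro z
    exact le_trans (ENNReal.tsum_comp_le_tsum_of_injective Subtype.val_injective _) (hbes z)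
end
end

section
/- Let {x_n} be a frame for H with ‖x_n‖ → 0 as n → ∞. Then {x_n/‖x_n‖} is not a Bessel sequence. -/
open scoped ComplexInnerProductSpace ENNReal
open Filter Topology

noncomputable section

variable {E : Type*} [NormedAddCommGroup E] [InnerProductSpace ℂ E]

/-- A frame whose elements' norms tend to `0` is not Bessel-normalizable. -/
theorem stmt10 {H : Type*} [NormedAddCommGroup H] [InnerProductSpace ℂ H] [CompleteSpace H]
    (hinf : ¬ FiniteDimensional ℂ H)
    (x : ℕ → H) (hx : ∀ n, x n ≠ 0)
    (hframe : ∃ A B : ℝ, FrameWith x A B)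
    (h0 : Tendsto (fun n => ‖x n‖) atTop (𝓝 0)) :
    ¬ ∃ B : ℝ, BesselWith (normalizeSeq x) B := by
  rintro ⟨B', hB'⟩
  obtain ⟨A, B, hA, hAB, hlow, _⟩ := hframe
  set C : ℝ := max B' 1 with hCdef
  have hC : 0 < C := lt_of_lt_of_le one_pos (le_max_right _ _)
  set ε : ℝ := A / (2 * C) with hεdef
  have hε : 0 < ε := div_pos hA (by positivity)
  -- eventually ‖x n‖ ^ 2 ≤ ε
  have hsq : Tendsto (fun n => ‖x n‖ ^ 2) atTop (𝓝 0) := by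
    have := (h0.mul h0)
    simpa [pow_two] using this
  obtain ⟨N, hN⟩ := (hsq.eventually (ge_mem_nhds hε)).exists_forall_of_atTop
  -- find z ≠ 0 orthogonal to x 0, ..., x (N-1)
  set K : Submodule ℂ H := Submodule.span ℂ (x '' Set.Iio N) with hKdef
  have hKfin : FiniteDimensional ℂ K := by
    apply FiniteDimensional.span_of_finite
    exact Set.Finite.image _ (Set.finite_Iio N)
  have hKne : K ≠ ⊤ := by
    intro h
    exact hinf (Module.Finite.equiv ((LinearEquiv.ofEq K ⊤ h).trans (Submodule.topEquiv)))
  have hKorth : Kᗮ ≠ ⊥ := by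
    simp only [ne_eq, Submodule.orthogonal_eq_bot_iff]
    exact hKne
  obtain ⟨z, hzK, hz0⟩ := Submodule.exists_mem_ne_zero_of_ne_bot hKorth
  -- inner products with early terms vanish
  have hzero : ∀ n < N, ⟪z, x n⟫ = 0 := by
    intro n hn
    have hxK : x n ∈ K := Submodule.subset_span ⟨n, hn, rfl⟩
    have := (Submodule.mem_orthogonal K z).mp hzK (x n) hxK
    rw [← inner_conj_symm, this, map_zero]
  -- pointwise bound
  have hpt : ∀ n, ENNReal.ofReal (‖⟪z, x n⟫‖ ^ 2) ≤
      ENNReal.ofReal ε * ENNReal.ofReal (‖⟪z, normalizeSeq x n⟫‖ ^ 2) := by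
    intro n
    rcases lt_or_ge n N with hn | hn
    · simp [hzero n hn]
    · have hxn : ‖x n‖ ≠ 0 := norm_ne_zero_iff.mpr (hx n)
      have hnorm : ‖⟪z, normalizeSeq x n⟫‖ = ‖x n‖⁻¹ * ‖⟪z, x n⟫‖ := by
        simp [normalizeSeq, inner_smul_right, norm_mul, abs_of_nonneg (norm_nonneg (x n))]
      have key : ‖⟪z, x n⟫‖ ^ 2 = ‖x n‖ ^ 2 * ‖⟪z, normalizeSeq x n⟫‖ ^ 2 := by
        rw [hnorm]
        field_simp
      rw [key, ENNReal.ofReal_mul (by positivity)]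
      exact mul_le_mul_left (ENNReal.ofReal_le_ofReal (hN n hn)) _
  -- sum the bound
  have hsum : ENNReal.ofReal (A * ‖z‖ ^ 2) ≤ ENNReal.ofReal (A / 2 * ‖z‖ ^ 2) := by
    calc ENNReal.ofReal (A * ‖z‖ ^ 2) ≤ ∑' n, ENNReal.ofReal (‖⟪z, x n⟫‖ ^ 2) := hlow z
    _ ≤ ∑' n, ENNReal.ofReal ε * ENNReal.ofReal (‖⟪z, normalizeSeq x n⟫‖ ^ 2) :=
        ENNReal.tsum_le_tsum hpt
    _ = ENNReal.ofReal ε * ∑' n, ENNReal.ofReal (‖⟪z, normalizeSeq x n⟫‖ ^ 2) :=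
        ENNReal.tsum_mul_left
    _ ≤ ENNReal.ofReal ε * ENNReal.ofReal (B' * ‖z‖ ^ 2) :=
        mul_le_mul_right (hB' z) _
    _ ≤ ENNReal.ofReal ε * ENNReal.ofReal (C * ‖z‖ ^ 2) := by
        apply mul_le_mul_right
        exact ENNReal.ofReal_le_ofReal
          (mul_le_mul_of_nonneg_right (le_max_left _ _) (by positivity))
    _ = ENNReal.ofReal (ε * (C * ‖z‖ ^ 2)) := (ENNReal.ofReal_mul hε.le).symm
    _ = ENNReal.ofReal (A / 2 * ‖z‖ ^ 2) := by
        congr 1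
        rw [hεdef]
        field_simp
  have hzn : 0 < ‖z‖ ^ 2 := by have := norm_pos_iff.mpr hz0; positivity
  have : A * ‖z‖ ^ 2 ≤ A / 2 * ‖z‖ ^ 2 :=
    (ENNReal.ofReal_le_ofReal_iff (mul_nonneg (by linarith) (sq_nonneg _))).mp hsum
  nlinarith
end
end

section
/- Let {x_n} be a sequence of nonzero vectors in H with ‖x_n‖ → ∞ as n → ∞. Suppose there exists an infinite-dimensional closed subspace M of H such that {P_M x_n} is a Bessel sequence in M. Then {x_n/‖x_n‖} does not satisfy a lower frame condition for H. -/
/-!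
Suppose `{xₙ/‖xₙ‖}` had lower frame bound `A > 0`, and let `B` be a Bessel bound of `{P_M xₙ}`.
Since `‖xₙ‖ → ∞`, from some index `N` on we have `‖xₙ‖² ≥ R` with `B < A R`. As `M` is
infinite-dimensional, it contains a vector `z ≠ 0` orthogonal to `P_M x₀, …, P_M x_{N-1}`.
For `z ∈ M` we have `⟪z, xₙ⟫ = ⟪z, P_M xₙ⟫`, so the first `N` terms of
`∑ |⟪z, xₙ⟫|² / ‖xₙ‖²` vanish and the sum is at most `(B / R) ‖z‖² < A ‖z‖²`, a contradiction.
-/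

open scoped ComplexInnerProductSpace ENNReal
open Filter Topology

noncomputable section

variable {E : Type*} [NormedAddCommGroup E] [InnerProductSpace ℂ E]

theorem exists_ne_zero_forall_inner_eq_zero_of_finite {𝕜 F : Type*} [RCLike 𝕜]
    [NormedAddCommGroup F] [InnerProductSpace 𝕜 F] (hF : ¬ FiniteDimensional 𝕜 F)
    {s : Set F} (hs : s.Finite) : ∃ z ≠ (0 : F), ∀ v ∈ s, inner 𝕜 v z = 0 := by
  have : FiniteDimensional 𝕜 (Submodule.span 𝕜 s) := FiniteDimensional.span_of_finite 𝕜 hs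
  have hne : (Submodule.span 𝕜 s)ᗮ ≠ ⊥ := by
    rw [Ne, Submodule.orthogonal_eq_bot_iff]
    intro htop
    rw [htop] at this
    exact hF Submodule.topEquiv.finiteDimensional
  obtain ⟨z, hz, hz0⟩ := Submodule.exists_mem_ne_zero_of_ne_bot hne
  exact ⟨z, hz0, fun v hv => (Submodule.mem_orthogonal _ z).1 hz v (Submodule.subset_span hv)⟩

theorem BesselWith.tsum_inner_le_of_mem {ι : Type*} {y : ι → E} {M : Submodule ℂ E}
    [M.HasOrthogonalProjection] {B : ℝ}
    (hB : BesselWith (fun i => M.orthogonalProjectionOnto (y i)) B) {z : E} (hz : z ∈ M) :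
    ∑' i, ENNReal.ofReal (‖⟪z, y i⟫‖ ^ 2) ≤ ENNReal.ofReal (B * ‖z‖ ^ 2) := by
  have h := hB ⟨z, hz⟩
  simp only [Submodule.inner_orthogonalProjectionOnto_eq_of_mem_left] at h
  exact h

theorem norm_inner_normalizeSeq_sq {ι : Type*} (y : ι → E) (z : E) (i : ι) :
    ‖⟪z, normalizeSeq y i⟫‖ ^ 2 = ‖⟪z, y i⟫‖ ^ 2 / ‖y i‖ ^ 2 := by
  simp only [normalizeSeq, inner_smul_right, norm_mul, norm_inv, Complex.norm_real, norm_norm]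
  ring

theorem tsum_norm_inner_normalizeSeq_sq_le {ι : Type*} {y : ι → E} {z : E} {B R : ℝ}
    (hR : 0 < R) (hB : ∑' i, ENNReal.ofReal (‖⟪z, y i⟫‖ ^ 2) ≤ ENNReal.ofReal (B * ‖z‖ ^ 2))
    (hzy : ∀ i, ⟪z, y i⟫ = 0 ∨ R ≤ ‖y i‖ ^ 2) :
    ∑' i, ENNReal.ofReal (‖⟪z, normalizeSeq y i⟫‖ ^ 2) ≤ ENNReal.ofReal (R⁻¹ * (B * ‖z‖ ^ 2)) := by
  have hterm : ∀ i, ‖⟪z, normalizeSeq y i⟫‖ ^ 2 ≤ R⁻¹ * ‖⟪z, y i⟫‖ ^ 2 := by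
    intro i
    rw [norm_inner_normalizeSeq_sq, inv_mul_eq_div]
    rcases hzy i with hzero | hlarge
    · simp [hzero]
    · exact div_le_div_of_nonneg_left (by positivity) hR hlarge
  calc ∑' i, ENNReal.ofReal (‖⟪z, normalizeSeq y i⟫‖ ^ 2)
      ≤ ∑' i, ENNReal.ofReal R⁻¹ * ENNReal.ofReal (‖⟪z, y i⟫‖ ^ 2) := by
        gcongr with i
        rw [← ENNReal.ofReal_mul (by positivity)]
        exact ENNReal.ofReal_le_ofReal (hterm i)
    _ ≤ ENNReal.ofReal R⁻¹ * ENNReal.ofReal (B * ‖z‖ ^ 2) := by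
        rw [ENNReal.tsum_mul_left]
        gcongr
    _ = ENNReal.ofReal (R⁻¹ * (B * ‖z‖ ^ 2)) := (ENNReal.ofReal_mul (by positivity)).symm

theorem stmt11_general {H : Type*} [NormedAddCommGroup H] [InnerProductSpace ℂ H]
    (x : ℕ → H)
    (h0 : Tendsto (fun n => ‖x n‖) atTop atTop)
    (M : Submodule ℂ H) [CompleteSpace M] (hM : ¬ FiniteDimensional ℂ M)
    (hB : ∃ B : ℝ, BesselWith (fun n => (M.orthogonalProjectionOnto (x n) : M)) B) :
    ¬ ∃ A > (0 : ℝ), LowerFrameWith (normalizeSeq x) A := by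
  rintro ⟨A, hA, hLF⟩
  obtain ⟨B, hB⟩ := hB
  set R := (|B| + 1) / A
  have hR : 0 < R := by positivity
  have hBR : R⁻¹ * B < A := by
    rw [inv_mul_lt_iff₀ hR, div_mul_cancel₀ _ hA.ne']
    linarith [le_abs_self B]
  obtain ⟨N, hN⟩ :=
    (((tendsto_pow_atTop two_ne_zero).comp h0).eventually_ge_atTop R).exists_forall_of_atTop
  obtain ⟨z, hz, hzN⟩ := exists_ne_zero_forall_inner_eq_zero_of_finite hM
    (Set.finite_range fun k : Fin N => M.orthogonalProjectionOnto (x k))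
  have hzx : ∀ n, ⟪(z : H), x n⟫ = 0 ∨ R ≤ ‖x n‖ ^ 2 := by
    intro n
    refine (lt_or_ge n N).imp (fun hn => ?_) (hN n)
    rw [← Submodule.inner_orthogonalProjectionOnto_eq_of_mem_left, ← inner_conj_symm,
      hzN _ ⟨⟨n, hn⟩, rfl⟩, map_zero]
  have hle := (hLF z).trans
    (tsum_norm_inner_normalizeSeq_sq_le hR (hB.tsum_inner_le_of_mem z.2) hzx)
  have hz2 : 0 < ‖(z : H)‖ ^ 2 := pow_pos (norm_pos_iff.2 (by exact_mod_cast hz)) 2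
  rw [ENNReal.ofReal_le_ofReal_iff'] at hle
  rcases hle with hle | hle <;> nlinarith

/-- If `‖x_n‖ → ∞` and the orthogonal projections of the `x_n` onto some
infinite-dimensional closed subspace `M` form a Bessel sequence in `M`, then the normalized
sequence does not satisfy a lower frame condition for `H`. -/
theorem stmt11 {H : Type*} [NormedAddCommGroup H] [InnerProductSpace ℂ H] [CompleteSpace H]
    (x : ℕ → H) (hx : ∀ n, x n ≠ 0)
    (h0 : Tendsto (fun n => ‖x n‖) atTop atTop)
    (M : Submodule ℂ H) [CompleteSpace M] (hM : ¬ FiniteDimensional ℂ M)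
    (hB : ∃ B : ℝ, BesselWith (fun n => (M.orthogonalProjectionOnto (x n) : M)) B) :
    ¬ ∃ A > (0 : ℝ), LowerFrameWith (normalizeSeq x) A :=
  stmt11_general x h0 M hM hB
end
end

section
/- Let A : H → H be a bounded normal operator (A*A = AA*) and x ∈ H, and fix k₀ ≥ 0 with A^{k₀} x ≠ 0. Then for all n ≥ 2, ‖A^{k₀+n} x‖ ≥ (‖A^{k₀+1} x‖ / ‖A^{k₀} x‖)^{n−1} · ‖A^{k₀+1} x‖. Consequently, if ‖A^{k₀+1} x‖ > ‖A^{k₀} x‖, then ‖A^{k₀+n} x‖ increases to ∞ as n → ∞. -/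
open scoped ComplexInnerProductSpace ENNReal
open Filter Topology

noncomputable section

variable {E : Type*} [NormedAddCommGroup E] [InnerProductSpace ℂ E]

lemma aux_key {H : Type*} [NormedAddCommGroup H] [InnerProductSpace ℂ H] [CompleteSpace H]
    (A : H →L[ℂ] H)
    (hnormal : (ContinuousLinearMap.adjoint A).comp A = A.comp (ContinuousLinearMap.adjoint A))
    (y : H) : ‖A y‖ ^ 2 ≤ ‖A (A y)‖ * ‖y‖ := by
  have hcomm : ∀ z : H, (ContinuousLinearMap.adjoint A) (A z) = A ((ContinuousLinearMap.adjoint A) z) := by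
    intro z
    exact congrArg (fun T => T z) hnormal
  have hnorm : ∀ z : H, ‖(ContinuousLinearMap.adjoint A) z‖ = ‖A z‖ := by
    intro z
    have h1 : ⟪(ContinuousLinearMap.adjoint A) z, (ContinuousLinearMap.adjoint A) z⟫ =
        ⟪A z, A z⟫ := by
      rw [ContinuousLinearMap.adjoint_inner_left, ← hcomm,
        ContinuousLinearMap.adjoint_inner_right]
    have h2 := h1
    rw [inner_self_eq_norm_sq_to_K, inner_self_eq_norm_sq_to_K] at h2
    have : (‖(ContinuousLinearMap.adjoint A) z‖ : ℝ) ^ 2 = ‖A z‖ ^ 2 := by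
      exact_mod_cast h2
    nlinarith [norm_nonneg ((ContinuousLinearMap.adjoint A) z), norm_nonneg (A z)]
  have h3 : ⟪(ContinuousLinearMap.adjoint A) (A y), y⟫ = ⟪A y, A y⟫ :=
    ContinuousLinearMap.adjoint_inner_left A y (A y)
  have h4 : ‖A y‖ ^ 2 = ‖⟪(ContinuousLinearMap.adjoint A) (A y), y⟫‖ := by
    rw [h3, inner_self_eq_norm_sq_to_K]
    simp [norm_pow]
  calc ‖A y‖ ^ 2 = ‖⟪(ContinuousLinearMap.adjoint A) (A y), y⟫‖ := h4
    _ ≤ ‖(ContinuousLinearMap.adjoint A) (A y)‖ * ‖y‖ := norm_inner_le_norm _ _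
    _ = ‖A (A y)‖ * ‖y‖ := by rw [hnorm]

/-- For a normal operator `A` and `A^{k₀}x ≠ 0`, for all `n ≥ 2` one has
`‖A^{k₀+n}x‖ ≥ (‖A^{k₀+1}x‖/‖A^{k₀}x‖)^{n−1}‖A^{k₀+1}x‖`; hence if
`‖A^{k₀+1}x‖ > ‖A^{k₀}x‖` then `‖A^{k₀+n}x‖` increases to `∞`. -/
theorem stmt17 {H : Type*} [NormedAddCommGroup H] [InnerProductSpace ℂ H] [CompleteSpace H]
    (A : H →L[ℂ] H)
    (hnormal : (ContinuousLinearMap.adjoint A).comp A = A.comp (ContinuousLinearMap.adjoint A))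
    (x : H) (k₀ : ℕ) (hx : (A ^ k₀) x ≠ 0) :
    (∀ n : ℕ, 2 ≤ n →
      (‖(A ^ (k₀ + 1)) x‖ / ‖(A ^ k₀) x‖) ^ (n - 1) * ‖(A ^ (k₀ + 1)) x‖ ≤
        ‖(A ^ (k₀ + n)) x‖) ∧
    (‖(A ^ k₀) x‖ < ‖(A ^ (k₀ + 1)) x‖ →
      Monotone (fun n : ℕ => ‖(A ^ (k₀ + n)) x‖) ∧
      Tendsto (fun n : ℕ => ‖(A ^ (k₀ + n)) x‖) atTop atTop) := by
  set a : ℕ → ℝ := fun k => ‖(A ^ (k₀ + k)) x‖ with ha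
  have hsucc : ∀ k : ℕ, (A ^ (k₀ + (k + 1))) x = A ((A ^ (k₀ + k)) x) := by
    intro k
    rw [show k₀ + (k + 1) = (k₀ + k) + 1 from rfl, pow_succ']
    rfl
  have ha0 : 0 < a 0 := by
    simp only [ha]
    simpa using norm_pos_iff.mpr hx
  have hkey : ∀ k : ℕ, a (k + 1) ^ 2 ≤ a (k + 2) * a k := by
    intro k
    have := aux_key A hnormal ((A ^ (k₀ + k)) x)
    simp only [ha]
    rw [hsucc k, hsucc (k + 1), hsucc k]
    exact this
  set c : ℝ := ‖(A ^ (k₀ + 1)) x‖ / ‖(A ^ k₀) x‖ with hc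
  have hca : c = a 1 / a 0 := by simp [hc, ha]
  have hcnn : 0 ≤ c := div_nonneg (norm_nonneg _) (norm_nonneg _)
  have hstep : ∀ k : ℕ, c * a k ≤ a (k + 1) := by
    by_cases h1 : a 1 = 0
    · intro k
      have : c = 0 := by rw [hca, h1, zero_div]
      rw [this, zero_mul]
      exact norm_nonneg _
    · have h1pos : 0 < a 1 := lt_of_le_of_ne (norm_nonneg _) (Ne.symm h1)
      have hcpos : 0 < c := by rw [hca]; positivity
      have main : ∀ k : ℕ, 0 < a k ∧ c * a k ≤ a (k + 1) := by
        intro k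
        induction k with
        | zero =>
          refine ⟨ha0, ?_⟩
          rw [hca, div_mul_cancel₀ _ (ne_of_gt ha0)]
        | succ n ih =>
          obtain ⟨hpos, hle⟩ := ih
          have hpos' : 0 < a (n + 1) := lt_of_lt_of_le (by positivity) hle
          refine ⟨hpos', ?_⟩
          have hk := hkey n
          have hnn : 0 ≤ a (n + 2) := norm_nonneg _
          nlinarith
      exact fun k => (main k).2
  have hgeo : ∀ m : ℕ, c ^ m * a 1 ≤ a (m + 1) := by
    intro m
    induction m with
    | zero => simp
    | succ n ih =>
      calc c ^ (n + 1) * a 1 = c * (c ^ n * a 1) := by ring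
        _ ≤ c * a (n + 1) := by
            exact mul_le_mul_of_nonneg_left ih hcnn
        _ ≤ a (n + 2) := hstep (n + 1)
  constructor
  · intro n hn
    have hn1 : n - 1 + 1 = n := by omega
    have := hgeo (n - 1)
    rw [hn1] at this
    simpa [ha] using this
  · intro hlt
    have h1pos : 0 < a 1 := lt_of_le_of_lt (norm_nonneg _) (by simpa [ha] using hlt)
    have hc1 : 1 < c := by
      rw [hca]
      rw [lt_div_iff₀ ha0, one_mul]
      simpa [ha] using hlt
    constructor
    · apply monotone_nat_of_le_succ
      intro n
      calc a n = 1 * a n := (one_mul _).symm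
        _ ≤ c * a n := mul_le_mul_of_nonneg_right (le_of_lt hc1) (norm_nonneg _)
        _ ≤ a (n + 1) := hstep n
    · have htend : Tendsto (fun n : ℕ => c ^ (n - 1) * a 1) atTop atTop := by
        have h1 : Tendsto (fun n : ℕ => c ^ n) atTop atTop :=
          tendsto_pow_atTop_atTop_of_one_lt hc1
        have h2 : Tendsto (fun n : ℕ => n - 1) atTop atTop :=
          tendsto_sub_atTop_nat 1
        exact (h1.comp h2).atTop_mul_const h1pos
      apply tendsto_atTop_mono' atTop _ htend
      filter_upwards [eventually_ge_atTop 1] with n hn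
      have hn1 : n - 1 + 1 = n := by omega
      have := hgeo (n - 1)
      rw [hn1] at this
      exact this
end
end
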